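/- Let X be a Tychonoff space and let V(X) be the free topological vector space over X. For every natural number n, the set SP_n(X) := {λ₁x₁ + ⋯ + λₙxₙ : λᵢ ∈ [−n,n], xᵢ ∈ X} is a closed subset of V(X). -/

import Mathlib

open Topology Set

universe u v w

/-- `IsFreeTVS V i` says that the (real) topological vector space `V` together with the
continuous map `i : X → V` is the free topological vector space over `X`: every continuous
map from `X` to a topological vector space `E` extends uniquely to a continuous linear
operator `V →L[ℝ] E`. -/
def IsFreeTVS {X : Type u} [TopologicalSpace X] (V : Type v) [AddCommGroup V] [Module ℝ V]
    [TopologicalSpace V] [IsTopologicalAddGroup V] [ContinuousSMul ℝ V] (i : X → V) : Prop :=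
  Continuous i ∧
    ∀ (E : Type w) [AddCommGroup E] [Module ℝ E] [TopologicalSpace E]
      [IsTopologicalAddGroup E] [ContinuousSMul ℝ E] (f : X → E),
      Continuous f → ∃! g : V →L[ℝ] E, ∀ x, g (i x) = f x

/-- `SPn i n` is the set `SP_n(X) = {λ₁x₁ + ⋯ + λₙxₙ : λᵢ ∈ [−n,n], xᵢ ∈ X}` inside `V`. -/
def SPn {X : Type u} {V : Type v} [AddCommGroup V] [Module ℝ V]
    (i : X → V) (n : ℕ) : Set V :=
  {v | ∃ (c : Fin n → ℝ) (x : Fin n → X),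
    (∀ j, c j ∈ Set.Icc (-(n : ℝ)) (n : ℝ)) ∧ v = ∑ j, c j • i (x j)}

/-! Each continuous `g : βX → ℝ` yields a continuous functional `L_g` on `V` extending `g` on `X`.
The map `v ↦ (L_g v)_g` into `ℝ^{C(βX, ℝ)}` is continuous, and `SP_n(X)` is the preimage under it
of the image of the compact set `[-n, n]ⁿ × (βX)ⁿ` under `(c, b) ↦ (∑ cⱼ g(bⱼ))_g`.
For the reverse inclusion, `V` is spanned by `X` (a functional vanishing on `X` is continuous into
indiscrete `ℝ`, hence zero by uniqueness), so `v = ∑ aₖ xₖ`. Continuous functions on the Tychonoff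
space `βX` separate finitely many points, so `L_g v = ∑ cⱼ g(bⱼ)` for all `g` forces
`∑ aₖ δ_{xₖ} = ∑ cⱼ δ_{bⱼ}`; dropping the `bⱼ` outside `X` writes `v` as an element of `SP_n(X)`. -/

/-- Every linear map into `IndiscreteReal` is continuous, so the uniqueness clause of `IsFreeTVS`
applies to arbitrary linear functionals on `V`. -/
def IndiscreteReal : Type w := ULift ℝ

namespace IndiscreteReal

instance : AddCommGroup IndiscreteReal := inferInstanceAs (AddCommGroup (ULift ℝ))
noncomputable instance : Module ℝ IndiscreteReal := inferInstanceAs (Module ℝ (ULift ℝ))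
instance : TopologicalSpace IndiscreteReal := ⊤
instance : IsTopologicalAddGroup IndiscreteReal where
  continuous_add := continuous_top
  continuous_neg := continuous_top
instance : ContinuousSMul ℝ IndiscreteReal := ⟨continuous_top⟩

end IndiscreteReal

namespace IsFreeTVS

variable {X : Type u} [TopologicalSpace X] {V : Type v} [AddCommGroup V] [Module ℝ V]
  [TopologicalSpace V] [IsTopologicalAddGroup V] [ContinuousSMul ℝ V] {i : X → V}

theorem ext (hV : IsFreeTVS.{u, v, w} V i) {E : Type w} [AddCommGroup E] [Module ℝ E]
    [TopologicalSpace E] [IsTopologicalAddGroup E] [ContinuousSMul ℝ E] {f g : V →L[ℝ] E}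
    (h : ∀ x, f (i x) = g (i x)) : f = g :=
  (hV.2 E (f ∘ i) (f.continuous.comp hV.1)).unique (fun _ => rfl) fun x => (h x).symm

theorem span_range_eq_top (hV : IsFreeTVS.{u, v, w} V i) :
    Submodule.span ℝ (range i) = ⊤ := by
  refine Submodule.eq_top_iff'.2 fun v => by_contra fun hv => ?_
  obtain ⟨φ, hφv, hφ⟩ := Submodule.exists_dual_map_eq_bot_of_notMem hv inferInstance
  let Φ : V →L[ℝ] IndiscreteReal.{w} :=
    { toLinearMap := ULift.moduleEquiv.symm.toLinearMap ∘ₗ φ, cont := continuous_top }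
  have hΦ : Φ = 0 := hV.ext fun x => by
    have : φ (i x) = 0 := by
      simpa [hφ] using
        Submodule.mem_map_of_mem (f := φ) (Submodule.subset_span (mem_range_self (f := i) x))
    exact congrArg ULift.up this
  exact hφv (congrArg ULift.down (DFunLike.congr_fun hΦ v))

theorem subsingleton_of_isEmpty [IsEmpty X] (hV : IsFreeTVS.{u, v, w} V i) : Subsingleton V := by
  refine subsingleton_of_forall_eq 0 fun v => ?_
  have hv : v ∈ Submodule.span ℝ (range i) := hV.span_range_eq_top ▸ Submodule.mem_top
  simpa [range_eq_empty] using hv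

theorem exists_continuousLinearMap_real (hV : IsFreeTVS.{u, v, w} V i) {f : X → ℝ}
    (hf : Continuous f) : ∃ L : V →L[ℝ] ℝ, ∀ x, L (i x) = f x := by
  obtain ⟨L, hL, -⟩ := hV.2 (ULift.{w} ℝ) (ULift.up ∘ f) (continuous_uliftUp.comp hf)
  exact ⟨(ContinuousLinearEquiv.ulift : ULift ℝ ≃L[ℝ] ℝ).toContinuousLinearMap.comp L,
    fun x => congrArg ULift.down (hL x)⟩

end IsFreeTVS

theorem Finsupp.linearCombination_eq_apply_of_eq_one {Y : Type*} {μ : Y →₀ ℝ} {g : Y → ℝ}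
    {y : Y} (hy : g y = 1) (h : ∀ z ∈ μ.support, z ≠ y → g z = 0) :
    Finsupp.linearCombination ℝ g μ = μ y := by
  rw [Finsupp.linearCombination_apply, Finsupp.sum, Finset.sum_eq_single y
    (fun z hz hzy => by simp [h z hz hzy]) (fun hy' => by simp [Finsupp.notMem_support_iff.1 hy'])]
  simp [hy]

section T35Space

variable {Y : Type*} [TopologicalSpace Y] [T35Space Y]

theorem exists_continuousMap_eq_one_and_eqOn_zero {y : Y} {s : Finset Y} (hy : y ∉ s) :
    ∃ g : C(Y, ℝ), g y = 1 ∧ ∀ z ∈ s, g z = 0 := by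
  obtain ⟨f, hf, hfy, hfs⟩ :=
    CompletelyRegularSpace.completely_regular y (s : Set Y) s.finite_toSet.isClosed hy
  exact ⟨.mk (fun z => 1 - (f z : ℝ)) (by fun_prop), by simp [hfy], fun z hz => by simp [hfs hz]⟩

theorem Finsupp.ext_of_linearCombination_continuousMap {μ ν : Y →₀ ℝ}
    (h : ∀ g : C(Y, ℝ), Finsupp.linearCombination ℝ g μ = Finsupp.linearCombination ℝ g ν) :
    μ = ν := by
  classical
  ext y
  obtain ⟨g, hgy, hg⟩ := exists_continuousMap_eq_one_and_eqOn_zero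
    (Finset.notMem_erase y (μ.support ∪ ν.support))
  have hpoint : ∀ ρ : Y →₀ ℝ, ρ.support ⊆ μ.support ∪ ν.support →
      Finsupp.linearCombination ℝ g ρ = ρ y := fun ρ hρ =>
    Finsupp.linearCombination_eq_apply_of_eq_one hgy fun z hz hzy =>
      hg z (Finset.mem_erase.2 ⟨hzy, hρ hz⟩)
  rw [← hpoint μ Finset.subset_union_left, ← hpoint ν Finset.subset_union_right, h]

end T35Space

theorem Finsupp.exists_eq_sum_single_of_mapDomain_eq {X Y M : Type*} [AddCommMonoid M]
    [Nonempty X] {e : X → Y} (he : Function.Injective e) {n : ℕ} {a : X →₀ M} {b : Fin n → Y}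
    {c : Fin n → M} (h : a.mapDomain e = ∑ j, Finsupp.single (b j) (c j)) :
    ∃ (c' : Fin n → M) (x : Fin n → X), (∀ j, c' j = c j ∨ c' j = 0) ∧
      a = ∑ j, Finsupp.single (x j) (c' j) := by
  classical
  refine ⟨fun j => if b j ∈ range e then c j else 0, fun j => Function.invFun e (b j),
    fun j => ite_eq_or_eq _ _ _, Finsupp.mapDomain_injective he ?_⟩
  have hfilter := congrArg (Finsupp.filter (· ∈ range e)) h
  rw [(Finsupp.filter_eq_self_iff _ _).2 fun y hy => by_contra fun hy' =>
    hy (Finsupp.mapDomain_of_notMem_range _ _ hy'), Finsupp.filter_sum] at hfilter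
  rw [hfilter, Finsupp.mapDomain_finsetSum]
  refine Finset.sum_congr rfl fun j _ => ?_
  by_cases hj : b j ∈ range e
  · dsimp only
    rw [if_pos hj, Finsupp.mapDomain_single, Function.invFun_eq hj,
      Finsupp.filter_single_of_pos _ hj]
  · dsimp only
    rw [if_neg hj, Finsupp.single_zero, Finsupp.mapDomain_zero,
      Finsupp.filter_single_of_neg _ hj]

theorem SPn_eq_preimage_range {X : Type u} {Y : Type*} [TopologicalSpace Y] [T35Space Y]
    [Nonempty X] {V : Type v} [AddCommGroup V] [Module ℝ V] {i : X → V}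
    (hi : Submodule.span ℝ (range i) = ⊤) {e : X → Y} (he : Function.Injective e)
    (L : C(Y, ℝ) → V →ₗ[ℝ] ℝ) (hL : ∀ g x, L g (i x) = g (e x)) (n : ℕ) :
    SPn i n = (fun v g => L g v) ⁻¹'
      range fun cb : (Fin n → Icc (-(n : ℝ)) n) × (Fin n → Y) =>
        fun g => ∑ j, (cb.1 j : ℝ) * g (cb.2 j) := by
  ext v
  constructor
  · rintro ⟨c, x, hc, rfl⟩
    exact ⟨(fun j => ⟨c j, hc j⟩, e ∘ x), funext fun g => by simp [hL]⟩
  · rintro ⟨⟨c, b⟩, hcb⟩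
    obtain ⟨a, rfl⟩ : ∃ a, Finsupp.linearCombination ℝ i a = v := by
      rw [← LinearMap.mem_range, Finsupp.range_linearCombination, hi]
      trivial
    have hmap : a.mapDomain e = ∑ j, Finsupp.single (b j) (c j : ℝ) :=
      Finsupp.ext_of_linearCombination_continuousMap fun g => by
        have hg : ∑ j, (c j : ℝ) * g (b j) = L g (Finsupp.linearCombination ℝ i a) :=
          congrFun hcb g
        have hLi : L g ∘ i = g ∘ e := funext (hL g)
        rw [Finsupp.linearCombination_mapDomain, ← hLi, ← Finsupp.apply_linearCombination, ← hg]
        simp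
    obtain ⟨c', x, hc', ha⟩ := Finsupp.exists_eq_sum_single_of_mapDomain_eq he hmap
    refine ⟨c', x, fun j => ?_, by simp [ha]⟩
    rcases hc' j with h | h <;> rw [h]
    · exact (c j).2
    · exact ⟨by simp, by simp⟩

/-- If `X` is a Tychonoff space and `(V, i)` is the free topological vector
space over `X`, then for every `n ∈ ℕ` the set
`SP_n(X) = {λ₁x₁ + ⋯ + λₙxₙ : λᵢ ∈ [−n,n], xᵢ ∈ X}` is closed in `V`. -/
theorem isClosed_SPn_of_isFreeTVS
    {X : Type u} [TopologicalSpace X] [T35Space X]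
    (V : Type v) [AddCommGroup V] [Module ℝ V] [TopologicalSpace V]
    [IsTopologicalAddGroup V] [ContinuousSMul ℝ V] (i : X → V)
    (hV : IsFreeTVS V i) (n : ℕ) :
    IsClosed (SPn i n) := by
  rcases isEmpty_or_nonempty X with hX | hX
  · have := hV.subsingleton_of_isEmpty
    exact isClosed_discrete _
  choose L hL using fun g : C(StoneCech X, ℝ) =>
    hV.exists_continuousLinearMap_real (g.continuous.comp continuous_stoneCechUnit)
  rw [SPn_eq_preimage_range hV.span_range_eq_top injective_stoneCechUnit_of_t35Space
    (fun g => L g) hL]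
  exact (isCompact_range (by fun_prop)).isClosed.preimage
    (continuous_pi fun g => (L g).continuous)
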